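/- Let n ≥ 2, let m be an integer with 0 ≤ m ≤ n−2, let k ∈ {1,…,n−m}, and let c₁,…,c_k be real constants. Define h(r,π) = ½ ( Σ_{j=1}^{n−m} π_j π_{n−m+1−j} + Σ_{j=n−m+1}^{n} π_j π_{2n−m+1−j} ) + Σ_{j=1}^{k} c_j V_1^{(j)}(φ(r)) on ℝⁿ × ℝⁿ. Then r^{k+1},…,r^n are cyclic variables for h: ∂h/∂r^i = 0 identically for every i ∈ {k+1,…,n}; equivalently, h Poisson-commutes with π_{k+1},…,π_n with respect to the canonical Poisson bracket in the (r,π)-coordinates. -/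

import Mathlib

open Finset

noncomputable section

/-- Component of `v : Fin n → ℝ` with label `t ∈ {1,…,n}` (and `0` otherwise). -/
def get (n : ℕ) (v : Fin n → ℝ) (t : ℕ) : ℝ :=
  if h : 1 ≤ t ∧ t ≤ n then v ⟨t - 1, by omega⟩ else 0

/-- The unit vector in `Fin n → ℝ` with label `i ∈ {1,…,n}`. -/
def evec (n i : ℕ) : Fin n → ℝ := fun t => if (t : ℕ) + 1 = i then 1 else 0

/-- Canonical Poisson bracket on `(Fin n → ℝ) × (Fin n → ℝ)` (coordinates `(r, π)`). -/
def pbr (n : ℕ) (f g : (Fin n → ℝ) × (Fin n → ℝ) → ℝ)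
    (x : (Fin n → ℝ) × (Fin n → ℝ)) : ℝ :=
  ∑ j : Fin n,
    (fderiv ℝ f x (Pi.single j 1, 0) * fderiv ℝ g x (0, Pi.single j 1) -
      fderiv ℝ g x (Pi.single j 1, 0) * fderiv ℝ f x (0, Pi.single j 1))

/-- The map `φ : ℝⁿ → ℝⁿ`, `r ↦ q`. -/
def phi (n m : ℕ) (r : Fin n → ℝ) : Fin n → ℝ := fun i =>
  if (i : ℕ) + 1 ≤ n - m then
    r i + (1/4) * ∑ j ∈ Finset.Icc 1 ((i : ℕ) + 1 - 1), get n r j * get n r ((i : ℕ) + 1 - j)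
  else
    -(1/4) * ∑ j ∈ Finset.Icc ((i : ℕ) + 1) n, get n r j * get n r (n - j + ((i : ℕ) + 1))

/-- `φ(r)` extended to all labels, with `q⁰ = 1` and `q^i = 0` for `i > n`. -/
def qe (n m : ℕ) (r : Fin n → ℝ) (t : ℕ) : ℝ :=
  if t = 0 then 1 else get n (phi n m r) t

/-- Basic separable potentials with non-negative superscript: `Vpos k r q = V_r^{(k)}`.
`V_r^{(0)} = 0`, `V_r^{(1)} = -q^r`, `V_r^{(k+1)} = V_{r+1}^{(k)} + V_r^{(1)} V_1^{(k)}`. -/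
def Vpos : ℕ → ℕ → (ℕ → ℝ) → ℝ
  | 0, _, _ => 0
  | 1, r, q => -q r
  | (k+2), r, q => Vpos (k+1) (r+1) q + (-q r) * Vpos (k+1) 1 q

/-- The Hamiltonian `h(r,π) = ½(Σ_{j=1}^{n−m} π_j π_{n−m+1−j} +
Σ_{j=n−m+1}^{n} π_j π_{2n−m+1−j}) + Σ_{j=1}^{k} c_j V_1^{(j)}(φ(r))`. -/
def ham (n m k : ℕ) (c : ℕ → ℝ) (x : (Fin n → ℝ) × (Fin n → ℝ)) : ℝ :=
  (1/2) * (∑ j ∈ Finset.Icc 1 (n - m), get n x.2 j * get n x.2 (n - m + 1 - j) +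
      ∑ j ∈ Finset.Icc (n - m + 1) n, get n x.2 j * get n x.2 (2 * n - m + 1 - j)) +
    ∑ j ∈ Finset.Icc 1 k, c j * Vpos j 1 (qe n m x.1)

lemma get_perturb (n i : ℕ) (r : Fin n → ℝ) (a : ℝ) (t : ℕ) (ht : t ≠ i) :
    get n (fun s => r s + a * evec n i s) t = get n r t := by
  unfold _root_.get
  split
  · next h =>
    have he : evec n i ⟨t - 1, by omega⟩ = 0 := by
      simp only [evec]
      rw [if_neg]
      omega
    simp [he]
  · rfl

lemma qe_perturb (n m i : ℕ) (r : Fin n → ℝ) (a : ℝ) (t : ℕ)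
    (htm : t ≤ n - m) (hti : t < i) :
    qe n m (fun s => r s + a * evec n i s) t = qe n m r t := by
  unfold qe
  rcases Nat.eq_zero_or_pos t with h0 | h1
  · simp [h0]
  rw [if_neg (by omega), if_neg (by omega)]
  have htn : t ≤ n := le_trans htm (Nat.sub_le n m)
  unfold _root_.get
  rw [dif_pos ⟨h1, htn⟩, dif_pos ⟨h1, htn⟩]
  unfold phi
  have hc : (⟨t - 1, by omega⟩ : Fin n).val + 1 = t := by simp; omega
  rw [if_pos (by rw [hc]; exact htm), if_pos (by rw [hc]; exact htm)]
  simp only [hc]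
  have he : evec n i ⟨t - 1, by omega⟩ = 0 := by
    simp only [evec]
    rw [if_neg]
    omega
  have hsum : ∑ j ∈ Finset.Icc 1 (t - 1),
      get n (fun s => r s + a * evec n i s) j * get n (fun s => r s + a * evec n i s) (t - j)
      = ∑ j ∈ Finset.Icc 1 (t - 1), get n r j * get n r (t - j) := by
    refine Finset.sum_congr rfl fun j hj => ?_
    simp only [Finset.mem_Icc] at hj
    rw [get_perturb n i r a j (by omega), get_perturb n i r a (t - j) (by omega)]
  simp [he, hsum]

lemma Vpos_congr : ∀ (k r : ℕ) (q q' : ℕ → ℝ),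
    (∀ t, t < r + k → q t = q' t) → Vpos k r q = Vpos k r q'
  | 0, _, _, _, _ => rfl
  | 1, r, q, q', h => by simp [Vpos, h r (by omega)]
  | (k+2), r, q, q', h => by
    unfold Vpos
    rw [Vpos_congr (k+1) (r+1) q q' (fun t ht => h t (by omega)),
      Vpos_congr (k+1) 1 q q' (fun t ht => h t (by omega)), h r (by omega)]

lemma ham_perturb (n m k : ℕ) (c : ℕ → ℝ) (i : ℕ) (hkm : k ≤ n - m) (hik : k < i)
    (x : (Fin n → ℝ) × (Fin n → ℝ)) (s : ℝ) :
    ham n m k c (x + s • (evec n i, 0)) = ham n m k c x := by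
  have h1 : (x + s • (evec n i, 0)).1 = fun t => x.1 t + s * evec n i t := rfl
  have h2 : (x + s • (evec n i, 0)).2 = x.2 := by
    ext t; simp [Prod.snd_add]
  unfold ham
  rw [h1, h2]
  congr 1
  refine Finset.sum_congr rfl fun j hj => ?_
  simp only [Finset.mem_Icc] at hj
  congr 1
  exact Vpos_congr j 1 _ _ fun t ht =>
    qe_perturb n m i x.1 s t (by omega) (by omega)

lemma deriv_ham_zero (n m k : ℕ) (c : ℕ → ℝ) (i : ℕ) (hkm : k ≤ n - m) (hik : k < i)
    (x : (Fin n → ℝ) × (Fin n → ℝ)) :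
    fderiv ℝ (ham n m k c) x (evec n i, 0) = 0 := by
  by_cases hd : DifferentiableAt ℝ (ham n m k c) x
  · have hg : HasDerivAt (fun s : ℝ => x + s • ((evec n i, 0) : (Fin n → ℝ) × (Fin n → ℝ)))
        ((evec n i, 0)) 0 := by
      simpa using ((hasDerivAt_id (0:ℝ)).smul_const ((evec n i, 0) : (Fin n → ℝ) × (Fin n → ℝ))).const_add x
    have hx : x + (0:ℝ) • ((evec n i, 0) : (Fin n → ℝ) × (Fin n → ℝ)) = x := by simp
    have hfd' : HasFDerivAt (ham n m k c) (fderiv ℝ (ham n m k c) x)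
        (x + (0:ℝ) • ((evec n i, 0) : (Fin n → ℝ) × (Fin n → ℝ))) := by
      rw [hx]; exact hd.hasFDerivAt
    have hcomp := hfd'.comp_hasDerivAt 0 hg
    have heq : (fun s : ℝ => ham n m k c (x + s • ((evec n i, 0) : (Fin n → ℝ) × (Fin n → ℝ))))
        = fun _ => ham n m k c x := funext fun s => ham_perturb n m k c i hkm hik x s
    simp only [Function.comp_def] at hcomp
    rw [heq] at hcomp
    exact ((hasDerivAt_const 0 (ham n m k c x)).unique hcomp).symm
  · rw [fderiv_zero_of_not_differentiableAt hd]
    rfl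

/-- for `0 ≤ m ≤ n−2` and `1 ≤ k ≤ n−m`, the variables `r^{k+1},…,r^n`
are cyclic for `h`: `∂h/∂r^i = 0` identically for `i ∈ {k+1,…,n}`; equivalently `h`
Poisson-commutes with `π_{k+1},…,π_n`. -/
theorem cyclic_variables_positive_potentials
    (n : ℕ) (hn : 2 ≤ n) (m : ℕ) (hm : m ≤ n - 2)
    (k : ℕ) (hk : k ∈ Finset.Icc 1 (n - m)) (c : ℕ → ℝ)
    (i : ℕ) (hi : i ∈ Finset.Icc (k + 1) n) :
    (∀ x : (Fin n → ℝ) × (Fin n → ℝ), fderiv ℝ (ham n m k c) x (evec n i, 0) = 0) ∧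
    (∀ x : (Fin n → ℝ) × (Fin n → ℝ), pbr n (ham n m k c) (fun y => get n y.2 i) x = 0) := by
  simp only [Finset.mem_Icc] at hk hi
  have part1 : ∀ x : (Fin n → ℝ) × (Fin n → ℝ),
      fderiv ℝ (ham n m k c) x (evec n i, 0) = 0 :=
    fun x => deriv_ham_zero n m k c i hk.2 (by omega) x
  refine ⟨part1, fun x => ?_⟩
  have hin : 1 ≤ i ∧ i ≤ n := ⟨by omega, hi.2⟩
  set jf : Fin n := ⟨i - 1, by omega⟩ with hjf
  set L : ((Fin n → ℝ) × (Fin n → ℝ)) →L[ℝ] ℝ :=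
    (ContinuousLinearMap.proj jf).comp (ContinuousLinearMap.snd ℝ (Fin n → ℝ) (Fin n → ℝ))
    with hL
  have hg : (fun y : (Fin n → ℝ) × (Fin n → ℝ) => get n y.2 i) = ⇑L := by
    funext y
    simp [_root_.get, dif_pos hin, hL, hjf, ContinuousLinearMap.proj_apply]
  have hfd : ∀ v, fderiv ℝ (fun y : (Fin n → ℝ) × (Fin n → ℝ) => get n y.2 i) x v = v.2 jf := by
    intro v
    rw [hg, L.fderiv]
    rfl
  unfold pbr
  have hterm : ∀ j : Fin n,
      (fderiv ℝ (ham n m k c) x (Pi.single j 1, 0) *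
          fderiv ℝ (fun y => get n y.2 i) x (0, Pi.single j 1) -
        fderiv ℝ (fun y => get n y.2 i) x (Pi.single j 1, 0) *
          fderiv ℝ (ham n m k c) x (0, Pi.single j 1))
      = fderiv ℝ (ham n m k c) x (Pi.single j 1, 0) * (if jf = j then 1 else 0) := by
    intro j
    rw [hfd, hfd]
    simp [Pi.single_apply]
  rw [Finset.sum_congr rfl fun j _ => hterm j]
  have hsum : ∑ j : Fin n,
      fderiv ℝ (ham n m k c) x (Pi.single j 1, 0) * (if jf = j then 1 else 0)
      = fderiv ℝ (ham n m k c) x (Pi.single jf 1, 0) := by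
    rw [Finset.sum_eq_single jf]
    · simp
    · intro b _ hb
      rw [if_neg (fun h => hb h.symm), mul_zero]
    · intro h; exact absurd (Finset.mem_univ jf) h
  rw [hsum]
  have hev : (Pi.single jf (1:ℝ) : Fin n → ℝ) = evec n i := by
    funext t
    simp only [Pi.single_apply, evec]
    by_cases h : (t : ℕ) + 1 = i
    · rw [if_pos, if_pos h]
      exact Fin.ext (by simp only [hjf]; omega)
    · rw [if_neg, if_neg h]
      intro he
      apply h
      rw [he]
      simp only [hjf]
      omega
  rw [hev]
  exact part1 x
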